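/- arXiv:2210.01517 — 3 statements merged into one kernel-verified Lean document; each statement's English description precedes it below -/
import Mathlib

section
/- Let H₀,…,H_{N-1} be complex Hadamard matrices of order d and let L¹,…,L^{N-1} be the Latin squares arising as the developments of rows 1,…,N-1 of a normalized (d,N,1)-difference matrix over Z_d. Define, for i,j ∈ [d], the unit vectors A⁰_{i,j} = (1/√d) |i⟩ ⊗ Σ_{k∈[d]} ⟨k|H₀|j⟩ |k⟩ in C^d ⊗ C^d, and for 1 ≤ r ≤ N-1, A^r_{i,j} = (1/√d) Σ_{k∈[d]} |L^r(i,k)⟩ ⊗ ⟨k|H_r|j⟩ |k⟩. Then each family {A^r_{i,j} : i,j ∈ [d]} (0 ≤ r ≤ N-1) is an orthonormal basis of C^d ⊗ C^d. -/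
/-!
Scaled by `1 / √d`, each `H_r` becomes a unitary `U`. The vector `A^r_{i,j}` places column `j`
of `U` on the graph `{(m_{r,k} + i, k)}`; graphs for distinct `i` are disjoint, and on a common
graph the inner products are those of the columns of `U`. Hence the `d²` vectors are orthonormal,
and they span because `d²` is the dimension.
-/

open Matrix

section GraphColumn

variable {𝕜 G κ ι : Type*} [RCLike 𝕜] [AddGroup G] [DecidableEq G] [Fintype G] [Fintype κ]

def graphColumn (g : κ → G) (U : Matrix κ ι 𝕜) (p : G × ι) : EuclideanSpace 𝕜 (G × κ) :=
  WithLp.toLp 2 fun x => if x.1 = g x.2 + p.1 then U x.2 p.2 else 0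

theorem inner_graphColumn (g : κ → G) (U : Matrix κ ι 𝕜) (p q : G × ι) :
    inner 𝕜 (graphColumn g U p) (graphColumn g U q) =
      if p.1 = q.1 then (Uᴴ * U) p.2 q.2 else 0 := by
  have fiber (b : κ) :
      ∑ a : G, inner 𝕜 (graphColumn g U p (a, b)) (graphColumn g U q (a, b)) =
        if p.1 = q.1 then star (U b p.2) * U b q.2 else 0 := by
    rw [Finset.sum_eq_single (g b + p.1)]
    · simp [graphColumn, eq_comm (a := p.1), mul_comm]
    · intro a _ ha
      simp [graphColumn, ha]
    · simp
  rw [PiLp.inner_apply, Fintype.sum_prod_type_right]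
  simp only [fiber]
  split_ifs <;> simp [mul_apply]

theorem orthonormal_graphColumn [DecidableEq ι] (g : κ → G) {U : Matrix κ ι 𝕜}
    (hU : Uᴴ * U = 1) : Orthonormal 𝕜 (graphColumn g U) := by
  rw [orthonormal_iff_ite]
  rintro ⟨i, j⟩ ⟨i', j'⟩
  simp [inner_graphColumn, hU, one_apply, ite_and]

theorem span_graphColumn_eq_top [DecidableEq κ] (g : κ → G) {U : Matrix κ κ 𝕜}
    (hU : Uᴴ * U = 1) : Submodule.span 𝕜 (Set.range (graphColumn g U)) = ⊤ :=
  (orthonormal_graphColumn g hU).linearIndependent.span_eq_top_of_card_eq_finrank'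
    (finrank_euclideanSpace ..).symm

end GraphColumn

theorem inv_sqrt_smul_mem_unitaryGroup {𝕜 n : Type*} [RCLike 𝕜] [Fintype n] [DecidableEq n]
    {H : Matrix n n 𝕜} {c : ℝ} (hc : 0 < c) (hH : H * Hᴴ = (c : 𝕜) • 1) :
    ((Real.sqrt c)⁻¹ : 𝕜) • H ∈ unitaryGroup n 𝕜 := by
  rw [mem_unitaryGroup_iff, star_eq_conjTranspose, conjTranspose_smul, smul_mul_smul, hH, smul_smul]
  have hs : (Real.sqrt c)⁻¹ * (Real.sqrt c)⁻¹ * c = 1 := by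
    rw [← mul_inv, Real.mul_self_sqrt hc.le, inv_mul_cancel₀ hc.ne']
  rw [RCLike.star_def, ← RCLike.ofReal_inv, RCLike.conj_ofReal, ← RCLike.ofReal_mul,
    ← RCLike.ofReal_mul, hs, RCLike.ofReal_one, one_smul]

theorem stmt9_general (d N : ℕ) [NeZero d]
    (m : Fin N → ZMod d → ZMod d)
    (H : Fin N → Matrix (ZMod d) (ZMod d) ℂ)
    (hH2 : ∀ r, H r * (H r).conjTranspose = (d : ℂ) • (1 : Matrix (ZMod d) (ZMod d) ℂ))
    (A : Fin N → ZMod d × ZMod d → EuclideanSpace ℂ (ZMod d × ZMod d))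
    (hA : ∀ (r : Fin N) (i j a b : ZMod d),
      A r (i, j) (a, b) =
        if a = m r b + i then ((Real.sqrt d : ℂ))⁻¹ * H r b j else 0) :
    ∀ r : Fin N, Orthonormal ℂ (A r) ∧ Submodule.span ℂ (Set.range (A r)) = ⊤ := by
  intro r
  set U : Matrix (ZMod d) (ZMod d) ℂ := ((Real.sqrt d)⁻¹ : ℂ) • H r
  have hU : Uᴴ * U = 1 := mem_unitaryGroup_iff'.mp <|
    inv_sqrt_smul_mem_unitaryGroup (Nat.cast_pos.mpr (NeZero.pos d)) (by simpa using hH2 r)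
  have hA_eq : A r = graphColumn (m r) U := by
    ext ⟨i, j⟩ ⟨a, b⟩
    simp [hA, graphColumn, U]
  rw [hA_eq]
  exact ⟨orthonormal_graphColumn _ hU, span_graphColumn_eq_top _ hU⟩

/-- Given complex Hadamard matrices `H_0,…,H_{N-1}` of order `d` and the
developments `L^r(i,k) = m_{r,k} + i` of the rows of a normalized `(d,N,1)`-difference matrix
over `Z_d`, each family `{A^r_{i,j}}` (product basis for `r = 0`, maximally entangled type for
`r ≥ 1`) is an orthonormal basis of `C^d ⊗ C^d`. -/
theorem stmt9 (d N : ℕ) [NeZero d] [NeZero N]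
    (m : Fin N → ZMod d → ZMod d)
    (hnorm : ∀ l, m 0 l = 0)
    (hdm : ∀ i j : Fin N, i ≠ j → Function.Bijective (fun l => m i l - m j l))
    (H : Fin N → Matrix (ZMod d) (ZMod d) ℂ)
    (hH1 : ∀ r a b, ‖H r a b‖ = 1)
    (hH2 : ∀ r, H r * (H r).conjTranspose = (d : ℂ) • (1 : Matrix (ZMod d) (ZMod d) ℂ))
    (A : Fin N → ZMod d × ZMod d → EuclideanSpace ℂ (ZMod d × ZMod d))
    (hA : ∀ (r : Fin N) (i j a b : ZMod d),
      A r (i, j) (a, b) =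
        if a = m r b + i then ((Real.sqrt d : ℂ))⁻¹ * H r b j else 0) :
    ∀ r : Fin N, Orthonormal ℂ (A r) ∧ Submodule.span ℂ (Set.range (A r)) = ⊤ :=
  stmt9_general d N m H hH2 A hA
end

section
/- Let H₀, H_r be complex Hadamard matrices of order d, let L^r be the development of row r (1 ≤ r ≤ N-1) of a normalized (d,N,1)-difference matrix over Z_d, and define A⁰_{i,j} = (1/√d)|i⟩ ⊗ Σ_k ⟨k|H₀|j⟩|k⟩ and A^r_{i',j'} = (1/√d) Σ_k |L^r(i',k)⟩ ⊗ ⟨k|H_r|j'⟩|k⟩. Then for all i,j,i',j' ∈ [d], |⟨A⁰_{i,j}, A^r_{i',j'}⟩| = 1/d; in particular, the product basis {A⁰_{i,j}} and the basis {A^r_{i',j'}} are mutually unbiased. -/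
/-!
Row `0` of the difference matrix vanishes, so `A⁰_{i,j}` is supported on the slice
`{(i, b)}`, while `A^r_{i',j'}` is supported on the graph `{(m_r(b) + i', b)}`. Since
`m_r = m_r - m_0` is a bijection, the two supports meet in exactly one point `(i, b₀)`, where
`m_r(b₀) = i - i'`. The inner product is therefore a single product of two entries, each of
modulus `1/√d` because the Hadamard entries are unimodular.
-/

open ComplexConjugate

theorem EuclideanSpace.inner_eq_of_forall_ne {ι 𝕜 : Type*} [Fintype ι] [RCLike 𝕜]
    (x y : EuclideanSpace 𝕜 ι) (p : ι) (h : ∀ q ≠ p, x q = 0 ∨ y q = 0) :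
    inner 𝕜 x y = conj (x p) * y p := by
  rw [PiLp.inner_apply, Finset.sum_eq_single p, RCLike.inner_apply, mul_comm]
  · intro q _ hq
    rcases h q hq with hx | hy
    · simp [hx]
    · simp [hy]
  · simp

theorem Function.bijective_of_bijective_sub_zero {α G : Type*} [AddGroup G] {f g : α → G}
    (hg : ∀ a, g a = 0) (h : Function.Bijective fun a => f a - g a) : Function.Bijective f := by
  simpa [hg] using h

theorem norm_inv_sqrt_mul_of_norm_eq_one {z : ℂ} (hz : ‖z‖ = 1) (x : ℝ) :
    ‖(Real.sqrt x : ℂ)⁻¹ * z‖ = (Real.sqrt x)⁻¹ := by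
  rw [norm_mul, hz, mul_one, norm_inv, Complex.norm_real, Real.norm_of_nonneg (Real.sqrt_nonneg _)]

theorem stmt10_general (d N : ℕ) [NeZero d] [NeZero N]
    (m : Fin N → ZMod d → ZMod d)
    (hnorm : ∀ l, m 0 l = 0)
    (hdm : ∀ i j : Fin N, i ≠ j → Function.Bijective (fun l => m i l - m j l))
    (H : Fin N → Matrix (ZMod d) (ZMod d) ℂ)
    (hH1 : ∀ r a b, ‖H r a b‖ = 1)
    (A : Fin N → ZMod d × ZMod d → EuclideanSpace ℂ (ZMod d × ZMod d))
    (hA : ∀ (r : Fin N) (i j a b : ZMod d),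
      A r (i, j) (a, b) =
        if a = m r b + i then ((Real.sqrt d : ℂ))⁻¹ * H r b j else 0)
    (r : Fin N) (hr : 1 ≤ r.val) :
    ∀ i j i' j' : ZMod d,
      ‖(inner ℂ (A 0 (i, j)) (A r (i', j')) : ℂ)‖ = 1 / d := by
  intro i j i' j'
  have hr0 : r ≠ 0 := Fin.pos_iff_ne_zero.mp hr
  obtain ⟨b₀, hb₀, huniq⟩ :=
    (Function.bijective_of_bijective_sub_zero hnorm (hdm r 0 hr0)).existsUnique (i - i')
  have hsupp : ∀ q ≠ (i, b₀), A 0 (i, j) q = 0 ∨ A r (i', j') q = 0 := by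
    rintro ⟨a, b⟩ hq
    rw [hA, hA, hnorm, zero_add]
    by_cases ha : a = i
    · refine .inr (if_neg fun hab => hq ?_)
      rw [ha, huniq b (by rw [ha] at hab; exact eq_sub_of_add_eq hab.symm)]
    · exact .inl (if_neg ha)
  have hmeet : i = m r b₀ + i' := sub_eq_iff_eq_add.mp hb₀.symm
  rw [EuclideanSpace.inner_eq_of_forall_ne _ _ _ hsupp, hA, hA, hnorm, zero_add, if_pos rfl,
    if_pos hmeet, norm_mul, RCLike.norm_conj,
    norm_inv_sqrt_mul_of_norm_eq_one (hH1 _ _ _), norm_inv_sqrt_mul_of_norm_eq_one (hH1 _ _ _),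
    ← mul_inv, Real.mul_self_sqrt (Nat.cast_nonneg d), one_div]

/-- The product basis `{A^0_{i,j}}` (from Hadamard matrix `H_0`) and the
maximally entangled basis `{A^r_{i',j'}}` (from `H_r` and the development of row `r ≥ 1` of a
normalized `(d,N,1)`-difference matrix over `Z_d`) are mutually unbiased:
`|⟨A^0_{i,j}, A^r_{i',j'}⟩| = 1/d`. -/
theorem stmt10 (d N : ℕ) [NeZero d] [NeZero N]
    (m : Fin N → ZMod d → ZMod d)
    (hnorm : ∀ l, m 0 l = 0)
    (hdm : ∀ i j : Fin N, i ≠ j → Function.Bijective (fun l => m i l - m j l))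
    (H : Fin N → Matrix (ZMod d) (ZMod d) ℂ)
    (hH1 : ∀ r a b, ‖H r a b‖ = 1)
    (hH2 : ∀ r, H r * (H r).conjTranspose = (d : ℂ) • (1 : Matrix (ZMod d) (ZMod d) ℂ))
    (A : Fin N → ZMod d × ZMod d → EuclideanSpace ℂ (ZMod d × ZMod d))
    (hA : ∀ (r : Fin N) (i j a b : ZMod d),
      A r (i, j) (a, b) =
        if a = m r b + i then ((Real.sqrt d : ℂ))⁻¹ * H r b j else 0)
    (r : Fin N) (hr : 1 ≤ r.val) :
    ∀ i j i' j' : ZMod d,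
      ‖(inner ℂ (A 0 (i, j)) (A r (i', j')) : ℂ)‖ = 1 / d :=
  stmt10_general d N m hnorm hdm H hH1 A hA r hr
end

section
/- Let H_r, H_{r'} be complex Hadamard matrices of order d and let L^r, L^{r'} be developments of two distinct rows r ≠ r' (both ≥ 1) of a normalized (d,N,1)-difference matrix over Z_d. Define A^r_{i,j} = (1/√d) Σ_k |L^r(i,k)⟩ ⊗ ⟨k|H_r|j⟩|k⟩ and similarly A^{r'}_{i',j'}. Then for all i,j,i',j' ∈ [d], |⟨A^r_{i,j}, A^{r'}_{i',j'}⟩| = 1/d, i.e., the two maximally entangled bases are mutually unbiased. -/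
/-!
`A^r_{i,j}` is supported on the graph `{(L^r(i,k), k)}` of the map `k ↦ m_{r,k} + i`. Two such
graphs for distinct rows `r ≠ r'` meet in exactly one point, since `k ↦ m_{r,k} - m_{r',k}` is a
bijection. The inner product therefore has a single term, the product of two
entries of modulus `1/√d`.
-/

open ComplexConjugate

section GraphSupported

variable {α β : Type*} [Fintype α] [Fintype β] [DecidableEq α]

lemma inner_eq_sum_of_graph_supported {u v : EuclideanSpace ℂ (α × β)} {f g : β → α}
    {x y : β → ℂ} (hu : ∀ a b, u (a, b) = if a = f b then x b else 0)
    (hv : ∀ a b, v (a, b) = if a = g b then y b else 0) :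
    inner ℂ u v = ∑ b, if f b = g b then conj (x b) * y b else 0 := by
  rw [PiLp.inner_apply, Fintype.sum_prod_type_right]
  refine Finset.sum_congr rfl fun b _ => ?_
  simp only [RCLike.inner_apply, hu, hv]
  split_ifs with hfg <;> simp [Finset.sum_ite_eq', hfg, ite_mul, eq_comm, mul_comm]

lemma inner_eq_of_graph_supported_of_unique {u v : EuclideanSpace ℂ (α × β)} {f g : β → α}
    {x y : β → ℂ} (hu : ∀ a b, u (a, b) = if a = f b then x b else 0)
    (hv : ∀ a b, v (a, b) = if a = g b then y b else 0) {b₀ : β}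
    (hfg : ∀ b, f b = g b ↔ b = b₀) :
    inner ℂ u v = conj (x b₀) * y b₀ := by
  rw [inner_eq_sum_of_graph_supported hu hv, Fintype.sum_eq_single b₀
    fun b hb => if_neg (mt (hfg b).1 hb), if_pos ((hfg b₀).2 rfl)]

end GraphSupported

lemma norm_inv_ofReal_mul_of_norm_eq_one {s : ℝ} (hs : 0 ≤ s) {z : ℂ} (hz : ‖z‖ = 1) :
    ‖(s : ℂ)⁻¹ * z‖ = s⁻¹ := by
  rw [norm_mul, hz, mul_one, norm_inv, Complex.norm_real, Real.norm_of_nonneg hs]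

theorem stmt11_general (d N : ℕ) [NeZero d]
    (m : Fin N → ZMod d → ZMod d)
    (hdm : ∀ i j : Fin N, i ≠ j → Function.Bijective (fun l => m i l - m j l))
    (H : Fin N → Matrix (ZMod d) (ZMod d) ℂ)
    (hH1 : ∀ r a b, ‖H r a b‖ = 1)
    (A : Fin N → ZMod d × ZMod d → EuclideanSpace ℂ (ZMod d × ZMod d))
    (hA : ∀ (r : Fin N) (i j a b : ZMod d),
      A r (i, j) (a, b) =
        if a = m r b + i then ((Real.sqrt d : ℂ))⁻¹ * H r b j else 0)
    (r r' : Fin N) (hrr : r ≠ r') :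
    ∀ i j i' j' : ZMod d,
      ‖(inner ℂ (A r (i, j)) (A r' (i', j')) : ℂ)‖ = 1 / d := by
  intro i j i' j'
  obtain ⟨b₀, hb₀, hunique⟩ := (hdm r r' hrr).existsUnique (i' - i)
  have hcoincide : ∀ b, m r b + i = m r' b + i' ↔ b = b₀ := fun b =>
    calc m r b + i = m r' b + i' ↔ m r b - m r' b = i' - i := by
          rw [sub_eq_sub_iff_add_eq_add, add_comm i']
      _ ↔ b = b₀ := ⟨hunique b, fun h => h ▸ hb₀⟩
  have hsqrt := Real.sqrt_nonneg (d : ℝ)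
  rw [inner_eq_of_graph_supported_of_unique (hA r i j) (hA r' i' j') hcoincide, norm_mul,
    RCLike.norm_conj, norm_inv_ofReal_mul_of_norm_eq_one hsqrt (hH1 r b₀ j),
    norm_inv_ofReal_mul_of_norm_eq_one hsqrt (hH1 r' b₀ j'), ← mul_inv, Real.mul_self_sqrt d.cast_nonneg,
    one_div]

/-- Two maximally entangled bases built from Hadamard matrices `H_r, H_{r'}`
and the developments of two distinct rows `r ≠ r'` (both `≥ 1`) of a normalized
`(d,N,1)`-difference matrix over `Z_d` are mutually unbiased:
`|⟨A^r_{i,j}, A^{r'}_{i',j'}⟩| = 1/d`. -/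
theorem stmt11 (d N : ℕ) [NeZero d] [NeZero N]
    (m : Fin N → ZMod d → ZMod d)
    (hnorm : ∀ l, m 0 l = 0)
    (hdm : ∀ i j : Fin N, i ≠ j → Function.Bijective (fun l => m i l - m j l))
    (H : Fin N → Matrix (ZMod d) (ZMod d) ℂ)
    (hH1 : ∀ r a b, ‖H r a b‖ = 1)
    (hH2 : ∀ r, H r * (H r).conjTranspose = (d : ℂ) • (1 : Matrix (ZMod d) (ZMod d) ℂ))
    (A : Fin N → ZMod d × ZMod d → EuclideanSpace ℂ (ZMod d × ZMod d))
    (hA : ∀ (r : Fin N) (i j a b : ZMod d),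
      A r (i, j) (a, b) =
        if a = m r b + i then ((Real.sqrt d : ℂ))⁻¹ * H r b j else 0)
    (r r' : Fin N) (hr : 1 ≤ r.val) (hr' : 1 ≤ r'.val) (hrr : r ≠ r') :
    ∀ i j i' j' : ZMod d,
      ‖(inner ℂ (A r (i, j)) (A r' (i', j')) : ℂ)‖ = 1 / d :=
  stmt11_general d N m hdm H hH1 A hA r r' hrr
end
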